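/- Let G = S_n act on X = {1,...,n} naturally and on Y = S_n by left multiplication, with μ₁ and μ₂ the uniform measures on X and Y. For each G-orbit O in X × Y, the uniform measure on O (mass 1/n! at each of its n! points) has marginals μ₁ and μ₂; these n measures are exactly the extreme points of K(μ₁,μ₂), so |E(μ₁,μ₂)| = n. -/

import Mathlib

open Finset

/-- `K (μ₁, μ₂)` for the `Sₙ`-action: invariant probability weights with given marginals. -/
def Kset (n : ℕ) : Set (Fin n × Equiv.Perm (Fin n) → ℝ) :=
  {w | (∀ p, 0 ≤ w p) ∧
       (∀ (g : Equiv.Perm (Fin n)) (p : Fin n × Equiv.Perm (Fin n)), w (g • p) = w p) ∧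
       (∀ x : Fin n, ∑ y : Equiv.Perm (Fin n), w (x, y) = 1 / (n : ℝ)) ∧
       (∀ y : Equiv.Perm (Fin n), ∑ x : Fin n, w (x, y) = 1 / (n.factorial : ℝ))}

/-- The uniform measure on the orbit of `p`, with mass `1/n!` at each point. -/
noncomputable def orbUnif (n : ℕ) (p : Fin n × Equiv.Perm (Fin n)) :
    Fin n × Equiv.Perm (Fin n) → ℝ :=
  (MulAction.orbit (Equiv.Perm (Fin n)) p).indicator fun _ => 1 / (n.factorial : ℝ)

/-!
The orbit of `(x, h)` under `g • (x, h) = (g x, g * h)` is determined by the label `h⁻¹ x`, so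
an invariant weight is a function of the label, and `c ↦ (q ↦ c (label q) / n!)` is an injective
linear map carrying the standard simplex of `ℝ^{Fin n}` onto `K(μ₁, μ₂)`; the `y`-marginal
condition is the normalisation `∑ c = 1`, and the `x`-marginal then holds automatically. Injective
linear maps preserve extreme points, so the extreme points of `K` are the images of the `n`
vertices of the simplex, which are the uniform measures on the `n` orbits.
-/

open Equiv

section ExtremePoints

variable {𝕜 E F ι : Type*}

lemma LinearMap.image_extremePoints_of_injective [Ring 𝕜] [PartialOrder 𝕜] [IsOrderedRing 𝕜]
    [AddCommGroup E] [Module 𝕜 E] [AddCommGroup F] [Module 𝕜 F]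
    (f : E →ₗ[𝕜] F) (hf : Function.Injective f) (s : Set E) :
    f '' s.extremePoints 𝕜 = (f '' s).extremePoints 𝕜 := by
  have hseg : ∀ x y, f '' openSegment 𝕜 x y = openSegment 𝕜 (f x) (f y) :=
    image_openSegment _ f.toAffineMap
  ext b
  constructor
  · rintro ⟨a, ⟨ha, hext⟩, rfl⟩
    refine ⟨Set.mem_image_of_mem f ha, ?_⟩
    rintro _ ⟨x₁, hx₁, rfl⟩ _ ⟨x₂, hx₂, rfl⟩ hb
    obtain ⟨y, hy, hya⟩ := (hseg x₁ x₂).symm ▸ hb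
    rw [hext hx₁ hx₂ (hf hya ▸ hy)]
  · rintro ⟨⟨a, ha, rfl⟩, hext⟩
    refine ⟨a, ⟨ha, fun x₁ hx₁ x₂ hx₂ hx => hf ?_⟩, rfl⟩
    exact hext (Set.mem_image_of_mem f hx₁) (Set.mem_image_of_mem f hx₂)
      (hseg x₁ x₂ ▸ Set.mem_image_of_mem f hx)

variable [Field 𝕜] [LinearOrder 𝕜] [IsStrictOrderedRing 𝕜] [Fintype ι] [DecidableEq ι]

lemma eq_single_of_mem_stdSimplex_of_apply_eq_one {x : ι → 𝕜} (hx : x ∈ stdSimplex 𝕜 ι)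
    {i : ι} (hi : x i = 1) : x = Pi.single i 1 := by
  funext j
  rcases eq_or_ne j i with rfl | hji
  · simp [hi]
  · have : x j + x i ≤ ∑ k, x k := add_le_sum (fun k _ => hx.1 k) (mem_univ j) (mem_univ i) hji
    rw [hx.2, hi] at this
    simp [hji, le_antisymm (by linarith) (hx.1 j)]

lemma single_mem_extremePoints_stdSimplex (i : ι) :
    Pi.single i 1 ∈ (stdSimplex 𝕜 ι).extremePoints 𝕜 := by
  refine mem_extremePoints_iff_left.2 ⟨single_mem_stdSimplex 𝕜 i, ?_⟩
  rintro x₁ hx₁ x₂ hx₂ ⟨a, b, ha, hb, hab, hx⟩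
  have hxi : a * x₁ i + b * x₂ i = 1 := by simpa using congrFun hx i
  -- a convex combination of two numbers `≤ 1` with positive weights equals `1` only if both do
  have h₁ : x₁ i ≤ 1 := (mem_Icc_of_mem_stdSimplex hx₁ i).2
  have h₂ : x₂ i ≤ 1 := (mem_Icc_of_mem_stdSimplex hx₂ i).2
  exact eq_single_of_mem_stdSimplex_of_apply_eq_one hx₁ (by nlinarith)

lemma extremePoints_stdSimplex :
    (stdSimplex 𝕜 ι).extremePoints 𝕜 = Set.range fun i => Pi.single i 1 := by
  refine subset_antisymm ?_ (Set.range_subset_iff.2 single_mem_extremePoints_stdSimplex)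
  rw [← convexHull_rangle_single_eq_stdSimplex]
  exact extremePoints_convexHull_subset

end ExtremePoints

section OrbitLabel

variable {α : Type*}

/-- Labels the orbits of the diagonal action (see `mem_orbit_iff_orbitLabel_eq`). -/
def orbitLabel (q : α × Perm α) : α := q.2⁻¹ q.1

@[simp]
lemma orbitLabel_smul (g : Perm α) (q : α × Perm α) : orbitLabel (g • q) = orbitLabel q := by
  simp [orbitLabel, Prod.smul_def, Perm.smul_def, mul_inv_rev, Perm.mul_apply]

lemma inv_smul_eq_orbitLabel_one (q : α × Perm α) : q.2⁻¹ • q = (orbitLabel q, 1) := by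
  simp [orbitLabel, Prod.smul_def, Perm.smul_def]

lemma orbitLabel_surjective : Function.Surjective (orbitLabel : α × Perm α → α) :=
  fun i => ⟨(i, 1), rfl⟩

lemma mem_orbit_iff_orbitLabel_eq (p q : α × Perm α) :
    q ∈ MulAction.orbit (Perm α) p ↔ orbitLabel q = orbitLabel p := by
  refine ⟨?_, fun h => ⟨q.2 * p.2⁻¹, ?_⟩⟩
  · rintro ⟨g, rfl⟩
    exact orbitLabel_smul g p
  · show (q.2 * p.2⁻¹) • p = q
    rw [mul_smul, inv_smul_eq_orbitLabel_one, ← h, ← inv_smul_eq_orbitLabel_one, smul_inv_smul]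

variable [Fintype α] [DecidableEq α] {M : Type*} [AddCommMonoid M]

lemma sum_perm_apply_eq (c : α → M) (x y : α) :
    ∑ h : Perm α, c (h x) = ∑ h : Perm α, c (h y) :=
  Fintype.sum_equiv (Equiv.mulRight (swap x y)) _ _ fun h => by simp [Perm.mul_apply]

lemma card_nsmul_sum_perm_apply (c : α → M) (x : α) :
    Fintype.card α • ∑ h : Perm α, c (h x) = (Fintype.card α).factorial • ∑ i, c i :=
  calc Fintype.card α • ∑ h : Perm α, c (h x)
      = ∑ y : α, ∑ h : Perm α, c (h y) := by simp [sum_perm_apply_eq c _ x]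
    _ = ∑ h : Perm α, ∑ y, c (h y) := sum_comm
    _ = ∑ _h : Perm α, ∑ i, c i := by simp only [Equiv.sum_comp]
    _ = (Fintype.card α).factorial • ∑ i, c i := by simp [Fintype.card_perm]

end OrbitLabel

/-- Spreads the weight `c i` uniformly over the `n!` points of the orbit labelled `i`. -/
noncomputable def orbitWeight (n : ℕ) : (Fin n → ℝ) →ₗ[ℝ] (Fin n × Perm (Fin n) → ℝ) :=
  (1 / n.factorial : ℝ) • LinearMap.funLeft ℝ ℝ orbitLabel

lemma orbitWeight_apply (n : ℕ) (c : Fin n → ℝ) (q : Fin n × Perm (Fin n)) :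
    orbitWeight n c q = 1 / n.factorial * c (orbitLabel q) := rfl

lemma orbitWeight_injective (n : ℕ) : Function.Injective (orbitWeight n) := by
  have hf : (1 / n.factorial : ℝ) ≠ 0 := by positivity
  intro c d h
  exact LinearMap.funLeft_injective_of_surjective ℝ ℝ _ orbitLabel_surjective
    (smul_right_injective _ hf h)

lemma orbitWeight_mem_Kset {n : ℕ} {c : Fin n → ℝ} (hc : c ∈ stdSimplex ℝ (Fin n)) :
    orbitWeight n c ∈ Kset n := by
  have hf : (n.factorial : ℝ) ≠ 0 := by positivity
  refine ⟨fun q => by simp only [orbitWeight_apply]; exact mul_nonneg (by positivity) (hc.1 _),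
    fun g q => by simp only [orbitWeight_apply, orbitLabel_smul], fun x => ?_, fun y => ?_⟩
  · have hn : (n : ℝ) ≠ 0 := by have := x.pos; positivity
    have key := card_nsmul_sum_perm_apply c x
    simp only [Fintype.card_fin, nsmul_eq_mul, hc.2, mul_one] at key
    have : ∑ y : Perm (Fin n), c (y⁻¹ x) = ∑ y : Perm (Fin n), c (y x) :=
      Fintype.sum_equiv (Equiv.inv _) _ _ fun _ => rfl
    simp only [orbitWeight_apply, orbitLabel, ← mul_sum, this]
    field_simp
    linarith
  · simp only [orbitWeight_apply, orbitLabel, ← mul_sum, Equiv.sum_comp y⁻¹ c, hc.2, mul_one]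

lemma Kset_eq_image_orbitWeight (n : ℕ) : Kset n = orbitWeight n '' stdSimplex ℝ (Fin n) := by
  refine subset_antisymm (fun w hw => ?_) (Set.image_subset_iff.2 fun c => orbitWeight_mem_Kset)
  have hf : (n.factorial : ℝ) ≠ 0 := by positivity
  refine ⟨fun i => n.factorial * w (i, 1), ⟨fun i => mul_nonneg (by positivity) (hw.1 _), ?_⟩, ?_⟩
  · simp [← mul_sum, hw.2.2.2 1, hf]
  · funext q
    rw [orbitWeight_apply, ← hw.2.1 q.2⁻¹ q, inv_smul_eq_orbitLabel_one]
    field_simp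

lemma orbUnif_eq_orbitWeight_single (n : ℕ) (p : Fin n × Perm (Fin n)) :
    orbUnif n p = orbitWeight n (Pi.single (orbitLabel p) 1) := by
  classical
  funext q
  rw [orbUnif, Set.indicator_apply, mem_orbit_iff_orbitLabel_eq, orbitWeight_apply,
    Pi.single_apply]
  split_ifs <;> simp

theorem stmt_18_general (n : ℕ) :
    (∀ p : Fin n × Equiv.Perm (Fin n), orbUnif n p ∈ Kset n) ∧
    Set.extremePoints ℝ (Kset n) =
      {w | ∃ p : Fin n × Equiv.Perm (Fin n), w = orbUnif n p} ∧
    (Set.extremePoints ℝ (Kset n)).ncard = n := by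
  have hext : Set.extremePoints ℝ (Kset n) = Set.range fun i => orbitWeight n (Pi.single i 1) := by
    rw [Kset_eq_image_orbitWeight, ← (orbitWeight n).image_extremePoints_of_injective
      (orbitWeight_injective n), extremePoints_stdSimplex, ← Set.range_comp]
    rfl
  have horb : {w | ∃ p : Fin n × Perm (Fin n), w = orbUnif n p} =
      Set.range fun i => orbitWeight n (Pi.single i 1) := by
    ext w
    simp only [Set.mem_ofPred_eq, Set.mem_range, orbUnif_eq_orbitWeight_single, eq_comm (a := w)]
    exact (orbitLabel_surjective.exists (p := fun i => orbitWeight n (Pi.single i 1) = w)).symm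
  have hinj : Function.Injective fun i : Fin n => orbitWeight n (Pi.single i 1) :=
    (orbitWeight_injective n).comp fun i j h => by simpa [Pi.single_apply] using congrFun h i
  refine ⟨fun p => ?_, hext.trans horb.symm, ?_⟩
  · rw [orbUnif_eq_orbitWeight_single]
    exact orbitWeight_mem_Kset (single_mem_stdSimplex ℝ _)
  · rw [hext, Set.ncard_range_of_injective hinj, Nat.card_eq_fintype_card, Fintype.card_fin]

theorem stmt_18 (n : ℕ) (hn : 1 ≤ n) :
    (∀ p : Fin n × Equiv.Perm (Fin n), orbUnif n p ∈ Kset n) ∧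
    Set.extremePoints ℝ (Kset n) =
      {w | ∃ p : Fin n × Equiv.Perm (Fin n), w = orbUnif n p} ∧
    (Set.extremePoints ℝ (Kset n)).ncard = n :=
  stmt_18_general n
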